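/- Let G be a finite connected graph with at least two vertices and suppose G admits a tree decomposition of width k (so the treewidth of G is at most k, and k ≥ 1). Then lpt(G) ≤ k; that is, there is a set of at most k vertices of G meeting every longest path of G. -/

import Mathlib

open SimpleGraph

/-- `p` is a longest path of `G`: it is a path, and no path of `G` is longer. -/
def IsLongestPath {V : Type*} (G : SimpleGraph V) {u v : V} (p : G.Walk u v) : Prop :=
  p.IsPath ∧ ∀ ⦃a b : V⦄ (q : G.Walk a b), q.IsPath → q.length ≤ p.length

/-- A tree decomposition of `G` over a tree `T`: every vertex lies in some bag, every
edge is contained in some bag, and for every vertex the set of tree nodes whose bag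
contains it induces a connected subgraph of `T`. -/
structure TreeDecomp {V ι : Type*} (G : SimpleGraph V) (T : SimpleGraph ι) where
  isTree : T.IsTree
  bag : ι → Finset V
  bag_cover : ∀ v : V, ∃ t, v ∈ bag t
  bag_edge : ∀ ⦃u v : V⦄, G.Adj u v → ∃ t, u ∈ bag t ∧ v ∈ bag t
  bag_conn : ∀ v : V, (T.induce {t | v ∈ bag t}).Preconnected

/-!
Any two longest paths of a connected graph meet, so by the Helly property of subtrees some bag
`B` meets every longest path. If `|B| ≤ k` we are done. Otherwise `|B| = k + 1`, and if no
`k`-subset of `B` is a transversal, every `x ∈ B` has a private longest path `P_x`, meeting `B`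
only in `x`.

If a component of `G - B` is adjacent to all of `B`, then moving from `B` towards that component
in `T`, every bag contains `B`, until one is strictly larger than `B`: a bag of size `k + 2`.
Otherwise take `x ∈ B` and a component `C` met by `P_x`; for `y ∈ B` not adjacent to `C`, the
path `P_y` meets `P_x` only on the other side of `x`, and rerouting `P_x` through `P_y` shows
that the side of `P_x` in `C` is shorter than half of `P_x`. Repeating this from the other side
makes both halves of `P_x` short.
-/

namespace SimpleGraph

variable {V : Type*} {G : SimpleGraph V}

/-- `u` and `v` lie in the same component of `G - S`. -/
def ReachableAvoiding (G : SimpleGraph V) (S : Set V) (u v : V) : Prop :=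
  ∃ p : G.Walk u v, ∀ w ∈ p.support, w ∉ S

namespace ReachableAvoiding

variable {S : Set V} {u v w : V}

lemma refl (hu : u ∉ S) : G.ReachableAvoiding S u u :=
  ⟨.nil, by simpa using hu⟩

lemma right_notMem (h : G.ReachableAvoiding S u v) : v ∉ S := by
  obtain ⟨p, hp⟩ := h
  exact hp v p.end_mem_support

lemma symm (h : G.ReachableAvoiding S u v) : G.ReachableAvoiding S v u := by
  obtain ⟨p, hp⟩ := h
  exact ⟨p.reverse, fun x hx => hp x (by simpa using hx)⟩

lemma trans (h : G.ReachableAvoiding S u v) (h' : G.ReachableAvoiding S v w) :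
    G.ReachableAvoiding S u w := by
  obtain ⟨p, hp⟩ := h
  obtain ⟨q, hq⟩ := h'
  refine ⟨p.append q, fun x hx => ?_⟩
  rcases (Walk.mem_support_append_iff _ _).mp hx with hx | hx
  exacts [hp x hx, hq x hx]

lemma of_mem_support [DecidableEq V] (p : G.Walk u v) (hp : ∀ x ∈ p.support, x ∉ S)
    (hw : w ∈ p.support) : G.ReachableAvoiding S u w :=
  ⟨p.takeUntil w hw, fun x hx => hp x (p.support_takeUntil_subset_support hw hx)⟩

end ReachableAvoiding

namespace Walk

lemma IsPath.append {u v w : V} {p : G.Walk u v} {q : G.Walk v w} (hp : p.IsPath)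
    (hq : q.IsPath) (h : ∀ x ∈ p.support, x ∈ q.support → x = v) : (p.append q).IsPath := by
  rw [isPath_def, support_append]
  have hq' := hq.support_nodup
  rw [← cons_tail_support] at hq'
  refine hp.support_nodup.append hq'.of_cons fun x hxp hxq => ?_
  obtain rfl := h x hxp (cons_tail_support q ▸ List.mem_cons_of_mem _ hxq)
  exact (List.nodup_cons.mp hq').1 hxq

lemma exists_prefix_first_mem (S : Set V) {a c : V} (W : G.Walk a c) (hc : c ∈ S) :
    ∃ z ∈ S, ∃ W' : G.Walk a z,
      W'.support ⊆ W.support ∧ ∀ x ∈ W'.support, x ∈ S → x = z := by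
  induction W with
  | nil => exact ⟨_, hc, .nil, fun _ h => h, by simp⟩
  | @cons a b c h W ih =>
    by_cases ha : a ∈ S
    · exact ⟨a, ha, .nil, by simp, by simp⟩
    obtain ⟨z, hz, W', hsub, hfirst⟩ := ih hc
    refine ⟨z, hz, .cons h W', by simpa using List.cons_subset_cons _ hsub, ?_⟩
    rintro x hx hxS
    rcases List.mem_cons.mp (support_cons h W' ▸ hx) with rfl | hx
    exacts [absurd hxS ha, hfirst x hx hxS]

lemma IsPath.exists_half [DecidableEq V] {u v w : V} {p : G.Walk u v} (hp : p.IsPath)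
    (hw : w ∈ p.support) :
    ∃ e, ∃ q : G.Walk w e,
      q.IsPath ∧ q.support ⊆ p.support ∧ p.length ≤ 2 * q.length := by
  have hlen := congrArg length (p.take_spec hw)
  rw [length_append] at hlen
  rcases le_total (p.takeUntil w hw).length (p.dropUntil w hw).length with h | h
  · exact ⟨v, p.dropUntil w hw, hp.dropUntil hw, p.support_dropUntil_subset_support hw,
      by omega⟩
  · refine ⟨u, (p.takeUntil w hw).reverse, (hp.takeUntil hw).reverse, fun x hx => ?_,
      by rw [length_reverse]; omega⟩
    exact p.support_takeUntil_subset_support hw (by simpa using hx)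

lemma IsPath.exists_adj_forall_reachableAvoiding [DecidableEq V] {S : Set V} {x b v : V}
    {p : G.Walk x b} (hp : p.IsPath) (hpS : ∀ u ∈ p.support, u ∈ S → u = x)
    (hv : v ∈ p.support) (hvx : v ≠ x) :
    ∃ c, G.Adj x c ∧ ∀ w ∈ p.support, w ≠ x → G.ReachableAvoiding S c w := by
  cases p with
  | nil => exact absurd (by simpa using hv) hvx
  | cons h q =>
    rw [cons_isPath_iff] at hp
    have hqS : ∀ w ∈ q.support, w ∉ S := fun w hw hwS =>
      hp.2 (hpS w (by simp [hw]) hwS ▸ hw)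
    exact ⟨_, h, fun w hw hwx => .of_mem_support q hqS (by simpa [hwx] using hw)⟩

end Walk

end SimpleGraph

open SimpleGraph Walk

namespace IsLongestPath

variable {V : Type*} {G : SimpleGraph V} {a b c d : V} {P : G.Walk a b} {Q : G.Walk c d}

lemma reverse (hP : IsLongestPath G P) : IsLongestPath G P.reverse :=
  ⟨hP.1.reverse, fun _ _ q hq => by simpa using hP.2 q hq⟩

lemma length_eq (hP : IsLongestPath G P) (hQ : IsLongestPath G Q) : P.length = Q.length :=
  le_antisymm (hQ.2 P hP.1) (hP.2 Q hQ.1)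

/-- `H`, then `R`, then the longer half of `Q` from `z` form a path. -/
lemma two_mul_length_add_two_le (hQ : IsLongestPath G Q) {e y z : V} {H : G.Walk e y}
    (hH : H.IsPath) (hHQ : ∀ x ∈ H.support, x ∉ Q.support) (R : G.Walk y z)
    (hRH : ∀ x ∈ R.support, x ∈ H.support → x = y)
    (hRQ : ∀ x ∈ R.support, x ∈ Q.support → x = z) (hz : z ∈ Q.support) :
    2 * H.length + 2 ≤ Q.length := by
  classical
  obtain ⟨_, K, hK, hKQ, hQK⟩ := hQ.1.exists_half hz
  have hRsub := R.support_bypass_subset_support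
  have hRK : (R.bypass.append K).IsPath :=
    R.bypass_isPath.append hK fun x hxR hxK => hRQ x (hRsub hxR) (hKQ hxK)
  have hHRK : (H.append (R.bypass.append K)).IsPath := by
    refine hH.append hRK fun x hxH hx => ?_
    rcases (mem_support_append_iff _ _).mp hx with hx | hx
    · exact hRH x (hRsub hx) hxH
    · exact absurd (hKQ hx) (hHQ x hxH)
  have hyz : y ≠ z := fun h => hHQ y H.end_mem_support (h ▸ hz)
  have hR : 1 ≤ R.bypass.length :=
    Nat.one_le_iff_ne_zero.mpr fun h => hyz (eq_of_length_eq_zero h)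
  have hlen := hQ.2 _ hHRK
  rw [length_append, length_append] at hlen
  omega

lemma exists_mem_support_inter (hconn : G.Connected) (hP : IsLongestPath G P)
    (hQ : IsLongestPath G Q) : ∃ x ∈ P.support, x ∈ Q.support := by
  classical
  by_contra! hPQ
  obtain ⟨W⟩ := hconn.preconnected a c
  obtain ⟨z, hzQ, W₁, -, hW₁Q⟩ :=
    W.exists_prefix_first_mem {x | x ∈ Q.support} Q.start_mem_support
  obtain ⟨y, hyP, W₂, hW₂, hW₂P⟩ :=
    W₁.reverse.exists_prefix_first_mem {x | x ∈ P.support} P.start_mem_support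
  obtain ⟨_, H, hH, hHP, hPH⟩ := hP.1.exists_half hyP
  have hshort := hQ.two_mul_length_add_two_le hH.reverse
    (fun x hx => hPQ x (hHP (by simpa using hx))) W₂.reverse
    (fun x hx hxH => hW₂P x (by simpa using hx) (hHP (by simpa using hxH)))
    (fun x hx hxQ => hW₁Q x (by simpa using hW₂ (by simpa using hx)) hxQ) hzQ
  rw [length_reverse, ← hP.length_eq hQ] at hshort
  omega

end IsLongestPath

namespace SimpleGraph

variable {V : Type*} {G : SimpleGraph V}

structure IsPrivateLongestPath (G : SimpleGraph V) (B : Set V) (x : V) {a b : V}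
    (P : G.Walk a b) : Prop where
  isLongestPath : IsLongestPath G P
  mem_support : x ∈ P.support
  mem : x ∈ B
  eq_of_mem : ∀ u ∈ P.support, u ∈ B → u = x

namespace IsPrivateLongestPath

variable {B : Set V} {x a b : V}

lemma reverse {P : G.Walk a b} (hP : G.IsPrivateLongestPath B x P) :
    G.IsPrivateLongestPath B x P.reverse :=
  ⟨hP.isLongestPath.reverse, by simpa using hP.mem_support, hP.mem,
    fun u hu => hP.eq_of_mem u (by simpa using hu)⟩

lemma exists_adj_reachableAvoiding {P : G.Walk a b} (hP : G.IsPrivateLongestPath B x P)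
    {v : V} (hv : v ∈ P.support) (hvB : v ∉ B) :
    ∃ c, G.Adj x c ∧ G.ReachableAvoiding B c v := by
  classical
  have hvx : v ≠ x := fun h => hvB (h ▸ hP.mem)
  have hpath := hP.isLongestPath.1
  have hxP := hP.mem_support
  rw [← P.take_spec hxP] at hv
  rcases (mem_support_append_iff _ _).mp hv with hv | hv
  · obtain ⟨c, hxc, hc⟩ := (hpath.takeUntil hxP).reverse.exists_adj_forall_reachableAvoiding
      (fun u hu => hP.eq_of_mem u (P.support_takeUntil_subset_support hxP (by simpa using hu)))
      (by simpa using hv) hvx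
    exact ⟨c, hxc, hc v (by simpa using hv) hvx⟩
  · obtain ⟨c, hxc, hc⟩ := (hpath.dropUntil hxP).exists_adj_forall_reachableAvoiding
      (fun u hu => hP.eq_of_mem u (P.support_dropUntil_subset_support hxP hu)) hv hvx
    exact ⟨c, hxc, hc v hv hvx⟩

/-- `Q` cannot enter the component of `c` in `G - B`, which contains `P₂` minus `x`; so `Q`
misses `P₂` and meets `P₁`. -/
lemma two_mul_length_add_two_le (hconn : G.Connected) {P₁ : G.Walk a x} {P₂ : G.Walk x b}
    (hP : G.IsPrivateLongestPath B x (P₁.append P₂)) {c : V} (hc : c ∈ P₂.support)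
    (hcB : c ∉ B) {y a' b' : V} {Q : G.Walk a' b'} (hQ : G.IsPrivateLongestPath B y Q)
    (hyc : ∀ c', G.Adj y c' → ¬ G.ReachableAvoiding B c' c) :
    2 * P₂.length + 2 ≤ (P₁.append P₂).length ∧ ∃ d ∈ P₁.support, d ∉ B := by
  classical
  have hpath := hP.isLongestPath.1
  have hP₂B : ∀ u ∈ P₂.support, u ∈ B → u = x := fun u hu =>
    hP.eq_of_mem u (P₁.support_subset_support_append_right P₂ hu)
  have hcx : c ≠ x := fun h => hcB (h ▸ hP.mem)
  obtain ⟨c₁, hxc₁, hside⟩ := hpath.of_append_right.exists_adj_forall_reachableAvoiding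
    hP₂B hc hcx
  have hdisj : ∀ v ∈ P₂.support, v ∉ Q.support := by
    intro v hv hvQ
    by_cases hvx : v = x
    · subst hvx
      obtain rfl := hQ.eq_of_mem v hvQ hP.mem
      exact hyc c₁ hxc₁ (hside c hc hcx)
    · obtain ⟨c', hyc', hc'v⟩ :=
        hQ.exists_adj_reachableAvoiding hvQ fun h => hvx (hP₂B v hv h)
      exact hyc c' hyc' (hc'v.trans ((hside v hv hvx).symm.trans (hside c hc hcx)))
  obtain ⟨d, hdP, hdQ⟩ := hP.isLongestPath.exists_mem_support_inter hconn hQ.isLongestPath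
  have hdP₁ : d ∈ P₁.support :=
    ((mem_support_append_iff _ _).mp hdP).resolve_right fun h => hdisj d h hdQ
  have hdB : d ∉ B := fun h =>
    hdisj d (hP.eq_of_mem d hdP h ▸ P₂.start_mem_support) hdQ
  refine ⟨?_, d, hdP₁, hdB⟩
  obtain ⟨z, hzQ, R, hR, hRQ⟩ :=
    (P₁.dropUntil d hdP₁).reverse.exists_prefix_first_mem {u | u ∈ Q.support} hdQ
  have hRP₁ : R.support ⊆ P₁.support := fun u hu =>
    P₁.support_dropUntil_subset_support hdP₁ (by simpa using hR hu)
  have hshort := hQ.isLongestPath.two_mul_length_add_two_le hpath.of_append_right.reverse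
    (fun u hu => hdisj u (by simpa using hu)) R
    (fun u hu huP₂ => by
      by_contra hux
      exact hpath.ne_of_mem_support_of_append hux (hRP₁ hu) (by simpa using huP₂) rfl)
    hRQ hzQ
  rwa [length_reverse, ← hP.isLongestPath.length_eq hQ.isLongestPath] at hshort

end IsPrivateLongestPath

lemma exists_reachableAvoiding_forall_adj (hconn : G.Connected) {B : Set V} (hB : B.Nontrivial)
    (hpriv : ∀ x ∈ B, ∃ (a b : V) (P : G.Walk a b), G.IsPrivateLongestPath B x P) :
    ∃ c₀ ∉ B, ∀ x ∈ B, ∃ c, G.Adj x c ∧ G.ReachableAvoiding B c c₀ := by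
  classical
  by_contra! h
  -- otherwise both sides of a private longest path would be shorter than half of it
  have hsides : ∀ {a b x : V} {P₁ : G.Walk a x} {P₂ : G.Walk x b},
      G.IsPrivateLongestPath B x (P₁.append P₂) →
        ∀ c ∈ P₂.support, c ∉ B → False := by
    intro a b x P₁ P₂ hP c hc hcB
    obtain ⟨y, hy, hyc⟩ := h c hcB
    obtain ⟨_, _, Q, hQ⟩ := hpriv y hy
    obtain ⟨h₂, d, hd, hdB⟩ := hP.two_mul_length_add_two_le hconn hc hcB hQ hyc
    have hP' : G.IsPrivateLongestPath B x (P₂.reverse.append P₁.reverse) := by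
      rw [← reverse_append]
      exact hP.reverse
    obtain ⟨z, hz, hzd⟩ := h d hdB
    obtain ⟨_, _, R, hR⟩ := hpriv z hz
    obtain ⟨h₁, -⟩ := hP'.two_mul_length_add_two_le hconn (by simpa using hd) hdB hR hzd
    simp only [length_append, length_reverse] at h₁ h₂
    omega
  obtain ⟨x, hx, y, hy, hxy⟩ := hB
  obtain ⟨_, _, P, hP⟩ := hpriv x hx
  obtain ⟨_, _, Q, hQ⟩ := hpriv y hy
  obtain ⟨c, hcP, hcQ⟩ := hP.isLongestPath.exists_mem_support_inter hconn hQ.isLongestPath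
  have hcB : c ∉ B := fun h => hxy ((hP.eq_of_mem c hcP h).symm.trans (hQ.eq_of_mem c hcQ h))
  have hxP := hP.mem_support
  rw [← P.take_spec hxP] at hP hcP
  rcases (mem_support_append_iff _ _).mp hcP with hc | hc
  · exact hsides (by rw [← reverse_append]; exact hP.reverse) c (by simpa using hc) hcB
  · exact hsides hP c hc hcB

end SimpleGraph

namespace SimpleGraph.IsAcyclic

variable {ι : Type*} {T : SimpleGraph ι} {t t' s : ι}

lemma mem_support_of_reachableAvoiding (hT : T.IsAcyclic) (hadj : T.Adj t t')
    (hs : T.ReachableAvoiding {t} t' s) (q : T.Walk s t) : t' ∈ q.support := by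
  obtain ⟨p, hp⟩ := hs
  have hmem := isBridge_iff_forall_walk_mem_edges.mp
    (isAcyclic_iff_forall_adj_isBridge.mp hT hadj.symm) (p.append q)
  rcases List.mem_append.mp (Walk.edges_append p q ▸ hmem) with h | h
  · exact absurd rfl (hp t (p.snd_mem_support_of_mem_edges h))
  · exact q.fst_mem_support_of_mem_edges h

lemma reachableAvoiding_of_adj (hT : T.IsAcyclic) {t'' : ι} (h₁ : T.Adj t t')
    (h₂ : T.Adj t' t'') (hne : t'' ≠ t) (hs : T.ReachableAvoiding {t'} t'' s) :
    T.ReachableAvoiding {t} t' s := by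
  classical
  obtain ⟨q, hq⟩ := hs
  have htq : t ∉ q.support := fun ht => by
    have := hT.mem_support_of_reachableAvoiding h₂ (.of_mem_support q hq ht) (.cons h₁ .nil)
    simp only [Walk.support_cons, Walk.support_nil, List.mem_cons,
      List.not_mem_nil, or_false] at this
    exact this.elim hne h₂.ne.symm
  refine ⟨.cons h₂ q, fun w hw hwt => ?_⟩
  rcases List.mem_cons.mp (Walk.support_cons h₂ q ▸ hw) with rfl | hw
  exacts [h₁.ne hwt.symm, htq (hwt ▸ hw)]

end SimpleGraph.IsAcyclic

namespace TreeDecomp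

variable {V ι : Type*} {G : SimpleGraph V} {T : SimpleGraph ι} (D : TreeDecomp G T)

lemma exists_walk_forall_mem_bag {v : V} {s s' : ι} (hs : v ∈ D.bag s) (hs' : v ∈ D.bag s') :
    ∃ p : T.Walk s s', ∀ r ∈ p.support, v ∈ D.bag r := by
  obtain ⟨w⟩ := D.bag_conn v ⟨s, hs⟩ ⟨s', hs'⟩
  refine ⟨w.map (Embedding.induce _).toHom, fun r hr => ?_⟩
  obtain ⟨u, -, rfl⟩ := List.mem_map.mp (Walk.support_map _ w ▸ hr)
  exact u.2

lemma mem_bag_of_adj {t t' s : ι} (hadj : T.Adj t t') {x : V} (hxt : x ∈ D.bag t)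
    (hxs : x ∈ D.bag s) (hs : T.ReachableAvoiding {t} t' s) : x ∈ D.bag t' := by
  obtain ⟨p, hp⟩ := D.exists_walk_forall_mem_bag hxs hxt
  exact hp _ (D.isTree.isAcyclic.mem_support_of_reachableAvoiding hadj hs p)

lemma reachableAvoiding_of_mem_bag {t s s' : ι} {v : V} (hv : v ∉ D.bag t)
    (hs : v ∈ D.bag s) (hs' : v ∈ D.bag s') : T.ReachableAvoiding {t} s s' := by
  obtain ⟨p, hp⟩ := D.exists_walk_forall_mem_bag hs hs'
  exact ⟨p, fun r hr hrt => hv (hrt ▸ hp r hr)⟩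

lemma reachableAvoiding_of_reachableAvoiding {t s s' : ι} {u v : V}
    (h : G.ReachableAvoiding (D.bag t) u v) (hs : u ∈ D.bag s) (hs' : v ∈ D.bag s') :
    T.ReachableAvoiding {t} s s' := by
  obtain ⟨p, hp⟩ := h
  induction p generalizing s with
  | nil => exact D.reachableAvoiding_of_mem_bag (hp _ (by simp)) hs hs'
  | @cons u w v huw q ih =>
    obtain ⟨s₀, hus₀, hws₀⟩ := D.bag_edge huw
    exact (D.reachableAvoiding_of_mem_bag (hp u (by simp)) hs hus₀).trans
      (ih hws₀ hs' fun x hx => hp x (by simp [hx]))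

lemma exists_adj_forall_reachableAvoiding (t : ι) {u v : V} (p : G.Walk u v)
    (hp : ∀ w ∈ p.support, w ∉ D.bag t) :
    ∃ t', T.Adj t t' ∧
      ∀ w ∈ p.support, ∀ s, w ∈ D.bag s → T.ReachableAvoiding {t} t' s := by
  classical
  obtain ⟨s₀, hs₀⟩ := D.bag_cover u
  obtain ⟨q⟩ := D.isTree.connected.preconnected t s₀
  cases hq : q.bypass with
  | nil => exact absurd hs₀ (hp u p.start_mem_support)
  | cons hadj q' =>
    have hq' := hq ▸ q.bypass_isPath
    rw [Walk.cons_isPath_iff] at hq'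
    refine ⟨_, hadj, fun w hw s hs => ?_⟩
    exact ReachableAvoiding.trans ⟨q', fun r hr hrt => hq'.2 (hrt ▸ hr)⟩
      (D.reachableAvoiding_of_reachableAvoiding (.of_mem_support p hp hw) hs₀ hs)

/-- Helly property for the subtrees of a tree decomposition. -/
theorem exists_bag_forall_meet [Fintype ι] (F : ∀ {u v : V}, G.Walk u v → Prop)
    (hF : ∀ {a b c d : V} {p : G.Walk a b} {q : G.Walk c d}, F p → F q →
      ∃ x ∈ p.support, x ∈ q.support) :
    ∃ t, ∀ {u v : V} (p : G.Walk u v), F p → ∃ x ∈ p.support, x ∈ D.bag t := by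
  classical
  by_contra! h
  choose u v p hFp hp using h
  choose f hf hbranch using fun t => D.exists_adj_forall_reachableAvoiding t (p t) (hp t)
  have : Nonempty ι := D.isTree.connected.nonempty
  let branch (t : ι) : Finset ι := Finset.univ.filter (T.ReachableAvoiding {t} (f t))
  obtain ⟨t₀, -, hmin⟩ :=
    Finset.univ.exists_min_image (fun t => (branch t).card) Finset.univ_nonempty
  have hT := D.isTree.isAcyclic
  -- `branch t` is the component of `T - t` containing a member avoiding the bag of `t`;
  -- the branch at `f t₀` is disjoint from the smallest branch or strictly inside it
  by_cases hback : f (f t₀) = t₀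
  · obtain ⟨x, hx₀, hx₁⟩ := hF (hFp t₀) (hFp (f t₀))
    obtain ⟨s, hs⟩ := D.bag_cover x
    obtain ⟨q, hq⟩ := (hback ▸ hbranch (f t₀) x hx₁ s hs).symm
    exact hq _ (hT.mem_support_of_reachableAvoiding (hf t₀) (hbranch t₀ x hx₀ s hs) q) rfl
  · have hsub : branch (f t₀) ⊂ branch t₀ := by
      refine (Finset.ssubset_iff_of_subset fun s hs => ?_).mpr ⟨f t₀, ?_, ?_⟩
      · simp only [branch, Finset.mem_filter, Finset.mem_univ, true_and] at hs ⊢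
        exact hT.reachableAvoiding_of_adj (hf t₀) (hf (f t₀)) hback hs
      · simpa [branch] using ReachableAvoiding.refl (G := T) (S := {t₀}) (hf t₀).ne.symm
      · simpa [branch] using fun h => h.right_notMem rfl
    exact (Finset.card_lt_card hsub).not_ge (hmin _ (Finset.mem_univ _))

lemma exists_bag_ssuperset {t : ι} {c₀ : V} (hc₀ : c₀ ∉ D.bag t)
    (hadj : ∀ x ∈ D.bag t, ∃ c, G.Adj x c ∧ G.ReachableAvoiding (D.bag t) c c₀) :
    ∃ s, D.bag t ⊂ D.bag s := by
  classical
  obtain ⟨s₀, hs₀⟩ := D.bag_cover c₀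
  obtain ⟨p⟩ := D.isTree.connected.preconnected t s₀
  -- along a path towards `s₀`, every bag contains `D.bag t` until one is strictly larger
  suffices ∀ {r s} (q : T.Walk r s), q.IsPath → c₀ ∈ D.bag s → D.bag r = D.bag t →
      ∃ s, D.bag t ⊂ D.bag s from this p.bypass p.bypass_isPath hs₀ rfl
  intro r s q
  induction q with
  | nil => exact fun _ hs hr => absurd (hr ▸ hs) hc₀
  | @cons r r' s₀ hrr' q ih =>
    intro hq hs₀ hr
    rw [Walk.cons_isPath_iff] at hq
    have hsub : D.bag t ⊆ D.bag r' := fun x hx => by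
      obtain ⟨c, hxc, hc⟩ := hadj x hx
      obtain ⟨s, hxs, hcs⟩ := D.bag_edge hxc
      rw [← hr] at hc hx
      have hs : T.ReachableAvoiding {r} s s₀ :=
        D.reachableAvoiding_of_reachableAvoiding hc hcs hs₀
      exact D.mem_bag_of_adj hrr' hx hxs
        (ReachableAvoiding.trans ⟨q, fun w hw hwr => hq.2 (hwr ▸ hw)⟩ hs.symm)
    rcases hsub.ssubset_or_eq with hlt | heq
    · exact ⟨r', hlt⟩
    · exact ih hq.1 hs₀ heq.symm

end TreeDecomp

theorem lpt_le_treewidth_general {V ι : Type*} [Fintype ι]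
    (G : SimpleGraph V) (T : SimpleGraph ι) (hconn : G.Connected)
    (k : ℕ) (hk : 1 ≤ k)
    (D : TreeDecomp G T) (hwidth : ∀ t : ι, (D.bag t).card ≤ k + 1) :
    ∃ S : Finset V, S.card ≤ k ∧
      ∀ ⦃u v : V⦄ (p : G.Walk u v), IsLongestPath G p → ∃ x ∈ S, x ∈ p.support := by
  classical
  obtain ⟨t, ht⟩ := D.exists_bag_forall_meet (IsLongestPath G)
    fun hp hq => hp.exists_mem_support_inter hconn hq
  by_cases hsmall : (D.bag t).card ≤ k
  · refine ⟨D.bag t, hsmall, fun u v p hp => ?_⟩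
    obtain ⟨x, hxp, hxB⟩ := ht p hp
    exact ⟨x, hxB, hxp⟩
  by_contra! hS
  have hpriv : ∀ x ∈ (D.bag t : Set V),
      ∃ (a b : V) (P : G.Walk a b), G.IsPrivateLongestPath (D.bag t) x P := by
    intro x hx
    have hcard := hwidth t
    obtain ⟨a, b, P, hP, hPx⟩ := hS ((D.bag t).erase x)
      (by rw [Finset.card_erase_of_mem hx]; omega)
    have hPB : ∀ u ∈ P.support, u ∈ D.bag t → u = x := fun u hu huB =>
      by_contra fun hux => hPx u (Finset.mem_erase.mpr ⟨hux, huB⟩) hu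
    obtain ⟨y, hyP, hyB⟩ := ht P hP
    exact ⟨a, b, P, hP, hPB y hyP hyB ▸ hyP, hx, hPB⟩
  obtain ⟨c₀, hc₀, hadj⟩ := exists_reachableAvoiding_forall_adj hconn
    (Finset.one_lt_card_iff_nontrivial.mp (by omega)) hpriv
  obtain ⟨s, hs⟩ := D.exists_bag_ssuperset hc₀ hadj
  have := Finset.card_lt_card hs
  have := hwidth s
  omega

/-- If a finite connected graph `G` with at least two vertices admits a tree
decomposition of width at most `k` (with `k ≥ 1`), then `lpt(G) ≤ k`: some set of at
most `k` vertices meets every longest path of `G`. -/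
theorem lpt_le_treewidth {V ι : Type*} [Fintype V] [Fintype ι]
    (G : SimpleGraph V) (T : SimpleGraph ι) (hconn : G.Connected)
    (hcard : 2 ≤ Fintype.card V) (k : ℕ) (hk : 1 ≤ k)
    (D : TreeDecomp G T) (hwidth : ∀ t : ι, (D.bag t).card ≤ k + 1) :
    ∃ S : Finset V, S.card ≤ k ∧
      ∀ ⦃u v : V⦄ (p : G.Walk u v), IsLongestPath G p → ∃ x ∈ S, x ∈ p.support :=
  lpt_le_treewidth_general G T hconn k hk D hwidth
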